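/- Let d ≥ 1 and let u₀ ∈ L²(ℝ^d) satisfy u₀ ≥ 0 almost everywhere. Let u(t,x) = (4πt)^{−d/2} ∫_{ℝ^d} e^{−|x−y|²/(4t)} u₀(y) dy. Then for every t > 0 and every k ∈ ℤ^d, ∫_{Q_2(k)} u(t,x)² dx ≤ 24^d e^{2d/t} · Σ_{n ∈ ℤ^d, ‖n−k‖_∞ ≤ 1} u(t,n)². -/

import Mathlib

/-!
For `x ∈ Q₂(k)` and any `y`, one of the `3^d` lattice points `n = k + m`, `m ∈ {-1, 0, 1}^d`,
satisfies `|n - y|² ≤ |x - y|² + d` (choose `mᵢ` coordinatewise). Hence the heat kernel at `x`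
is dominated by `e^{d/4t}` times the sum of the kernels at these neighbours, and since `u₀ ≥ 0`,
`u(t,x) ≤ e^{d/4t} ∑ₙ u(t,n)`. Squaring with Cauchy–Schwarz over the `3^d` terms and integrating
over the cube, of volume `2^d`, gives the bound with the better constant `6^d e^{d/2t}`.
-/

open Real MeasureTheory

/-- The solution of the heat equation on `ℝ^d` with initial datum `u₀`, given by convolution
with the Gaussian heat kernel. -/
noncomputable def heatSolution (d : ℕ) (u₀ : EuclideanSpace ℝ (Fin d) → ℝ)
    (t : ℝ) (x : EuclideanSpace ℝ (Fin d)) : ℝ :=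
  (4 * Real.pi * t) ^ (-(d : ℝ) / 2) * ∫ y, Real.exp (-‖x - y‖ ^ 2 / (4 * t)) * u₀ y

open Finset

section Gaussian

variable {V : Type*} [NormedAddCommGroup V] [InnerProductSpace ℝ V] [FiniteDimensional ℝ V]
  [MeasurableSpace V] [BorelSpace V]

lemma integrable_exp_neg_mul_norm_sq {b : ℝ} (hb : 0 < b) :
    Integrable (fun v : V => exp (-b * ‖v‖ ^ 2)) := by
  refine (GaussianFourier.integrable_cexp_neg_mul_sq_norm_add (V := V) (b := b)
    (by simpa using hb) 0 0).norm.congr (.of_forall fun v => ?_)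
  simp only [Complex.norm_exp, inner_zero_left, Complex.ofReal_zero, mul_zero, add_zero]
  norm_cast

lemma memLp_two_exp_neg_norm_sub_sq_div {c : ℝ} (hc : 0 < c) (x : V) :
    MemLp (fun y : V => exp (-‖x - y‖ ^ 2 / c)) 2 := by
  rw [memLp_two_iff_integrable_sq (by fun_prop)]
  refine ((integrable_exp_neg_mul_norm_sq (V := V) (b := 2 / c) (by positivity)).comp_sub_left
    x).congr (.of_forall fun y => ?_)
  simp only [← exp_nat_mul]
  congr 1
  ring

lemma integrable_exp_neg_norm_sub_sq_div_mul {c : ℝ} (hc : 0 < c) {f : V → ℝ}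
    (hf : MemLp f 2) (x : V) :
    Integrable (fun y => exp (-‖x - y‖ ^ 2 / c) * f y) :=
  (memLp_two_exp_neg_norm_sub_sq_div hc x).integrable_mul hf

end Gaussian

lemma exists_mem_sq_sub_le_sq_sub_add_one {a x : ℝ} (hx : |x - a| ≤ 1) (y : ℝ) :
    ∃ m ∈ ({-1, 0, 1} : Finset ℤ), (a + m - y) ^ 2 ≤ (x - y) ^ 2 + 1 := by
  obtain ⟨h₁, h₂⟩ := abs_le.1 hx
  rcases le_or_gt y (a - 1) with hy | hy
  · exact ⟨-1, by decide, by push_cast; nlinarith⟩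
  rcases le_or_gt (a + 1) y with hy' | hy'
  · exact ⟨1, by decide, by push_cast; nlinarith⟩
  · exact ⟨0, by decide, by push_cast; nlinarith⟩

section Lattice

variable {d : ℕ}

def cubeSideTwo (c : Fin d → ℝ) : Set (EuclideanSpace ℝ (Fin d)) := {x | ∀ i, |x i - c i| ≤ 1}

variable (d) in
def cubeOffsets : Finset (Fin d → ℤ) := Fintype.piFinset fun _ => {-1, 0, 1}

def latticePoint (n : Fin d → ℤ) : EuclideanSpace ℝ (Fin d) := WithLp.toLp 2 fun i => (n i : ℝ)

lemma card_cubeOffsets : #(cubeOffsets d) = 3 ^ d := by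
  simp [cubeOffsets, Fintype.card_piFinset]

lemma volume_cubeSideTwo (c : Fin d → ℝ) : volume (cubeSideTwo c) = 2 ^ d := by
  have hpre : cubeSideTwo c = WithLp.ofLp ⁻¹' Set.univ.pi fun i => Set.Icc (c i - 1) (c i + 1) := by
    ext x
    simp only [cubeSideTwo, Set.mem_ofPred_eq, Set.mem_preimage, Set.mem_univ_pi, Set.mem_Icc,
      abs_le, neg_le_sub_iff_le_add, sub_le_iff_le_add']
    exact forall_congr' fun i => by rw [add_comm (1 : ℝ)]
  rw [hpre, (PiLp.volume_preserving_ofLp (Fin d)).measure_preimage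
    (MeasurableSet.univ_pi fun _ => measurableSet_Icc).nullMeasurableSet, volume_pi_pi]
  simp only [Real.volume_Icc, add_sub_sub_cancel]
  norm_num

lemma exists_mem_cubeOffsets_norm_sub_sq_le {k : Fin d → ℤ} {x : EuclideanSpace ℝ (Fin d)}
    (hx : x ∈ cubeSideTwo (k ·)) (y : EuclideanSpace ℝ (Fin d)) :
    ∃ m ∈ cubeOffsets d, ‖latticePoint (k + m) - y‖ ^ 2 ≤ ‖x - y‖ ^ 2 + d := by
  choose m hm hle using fun i => exists_mem_sq_sub_le_sq_sub_add_one (hx i) (y i)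
  refine ⟨m, Fintype.mem_piFinset.2 hm, ?_⟩
  simp only [EuclideanSpace.norm_sq_eq, Real.norm_eq_abs, sq_abs]
  calc ∑ i, ((latticePoint (k + m) - y) i) ^ 2 ≤ ∑ i, (((x - y) i) ^ 2 + 1) :=
        sum_le_sum fun i _ => by simpa [latticePoint] using hle i
    _ = ∑ i, ((x - y) i) ^ 2 + d := by simp [sum_add_distrib]

lemma exp_neg_norm_sub_sq_div_le_exp_mul_sum {c : ℝ} (hc : 0 < c) {k : Fin d → ℤ}
    {x : EuclideanSpace ℝ (Fin d)} (hx : x ∈ cubeSideTwo (k ·)) (y : EuclideanSpace ℝ (Fin d)) :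
    exp (-‖x - y‖ ^ 2 / c) ≤
      exp (d / c) * ∑ m ∈ cubeOffsets d, exp (-‖latticePoint (k + m) - y‖ ^ 2 / c) := by
  obtain ⟨m, hm, hle⟩ := exists_mem_cubeOffsets_norm_sub_sq_le hx y
  calc exp (-‖x - y‖ ^ 2 / c) ≤ exp (d / c) * exp (-‖latticePoint (k + m) - y‖ ^ 2 / c) := by
        rw [← exp_add, ← add_div]
        gcongr
        linarith
    _ ≤ _ := by
        gcongr
        exact single_le_sum (f := fun m => exp (-‖latticePoint (k + m) - y‖ ^ 2 / c))
          (fun _ _ => (exp_pos _).le) hm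

end Lattice

section Heat

variable {d : ℕ} {u₀ : EuclideanSpace ℝ (Fin d) → ℝ} {t : ℝ}

lemma heatSolution_nonneg (hu₀pos : 0 ≤ᵐ[volume] u₀) (ht : 0 ≤ t) (x : EuclideanSpace ℝ (Fin d)) :
    0 ≤ heatSolution d u₀ t x :=
  mul_nonneg (rpow_nonneg (by positivity) _) <| integral_nonneg_of_ae <| by
    filter_upwards [hu₀pos] with y hy using mul_nonneg (exp_pos _).le hy

lemma heatSolution_le_exp_mul_sum (hu₀L2 : MemLp u₀ 2) (hu₀pos : 0 ≤ᵐ[volume] u₀) (ht : 0 < t)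
    {k : Fin d → ℤ} {x : EuclideanSpace ℝ (Fin d)} (hx : x ∈ cubeSideTwo (k ·)) :
    heatSolution d u₀ t x ≤
      exp (d / (4 * t)) * ∑ m ∈ cubeOffsets d, heatSolution d u₀ t (latticePoint (k + m)) := by
  have hint (m : Fin d → ℤ) := integrable_exp_neg_norm_sub_sq_div_mul (by positivity : 0 < 4 * t)
    hu₀L2 (latticePoint (k + m))
  have hconv : ∫ y, exp (-‖x - y‖ ^ 2 / (4 * t)) * u₀ y ≤ exp (d / (4 * t)) *
      ∑ m ∈ cubeOffsets d, ∫ y, exp (-‖latticePoint (k + m) - y‖ ^ 2 / (4 * t)) * u₀ y := by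
    rw [← integral_finsetSum _ fun m _ => hint m, ← integral_const_mul]
    refine integral_mono_of_nonneg ?_ ((integrable_finsetSum _ fun m _ => hint m).const_mul _) ?_
    · filter_upwards [hu₀pos] with y hy using mul_nonneg (exp_pos _).le hy
    · filter_upwards [hu₀pos] with y hy
      rw [← sum_mul, ← mul_assoc]
      exact mul_le_mul_of_nonneg_right
        (exp_neg_norm_sub_sq_div_le_exp_mul_sum (by positivity) hx y) hy
  calc heatSolution d u₀ t x
      ≤ (4 * π * t) ^ (-(d : ℝ) / 2) * (exp (d / (4 * t)) *
          ∑ m ∈ cubeOffsets d, ∫ y, exp (-‖latticePoint (k + m) - y‖ ^ 2 / (4 * t)) * u₀ y) :=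
        mul_le_mul_of_nonneg_left hconv (rpow_nonneg (by positivity) _)
    _ = _ := by rw [mul_left_comm, mul_sum]; rfl

lemma heatSolution_sq_le_three_pow_mul_sum (hu₀L2 : MemLp u₀ 2) (hu₀pos : 0 ≤ᵐ[volume] u₀)
    (ht : 0 < t) {k : Fin d → ℤ} {x : EuclideanSpace ℝ (Fin d)} (hx : x ∈ cubeSideTwo (k ·)) :
    heatSolution d u₀ t x ^ 2 ≤ 3 ^ d * exp (d / (2 * t)) *
      ∑ m ∈ cubeOffsets d, heatSolution d u₀ t (latticePoint (k + m)) ^ 2 := by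
  have hexp : exp (d / (4 * t)) ^ 2 = exp (d / (2 * t)) := by
    rw [← exp_nat_mul]
    congr 1
    field_simp
    ring
  have hcs : (∑ m ∈ cubeOffsets d, heatSolution d u₀ t (latticePoint (k + m))) ^ 2 ≤
      3 ^ d * ∑ m ∈ cubeOffsets d, heatSolution d u₀ t (latticePoint (k + m)) ^ 2 := by
    simpa [card_cubeOffsets] using sq_sum_le_card_mul_sum_sq (s := cubeOffsets d)
      (f := fun m => heatSolution d u₀ t (latticePoint (k + m)))
  calc heatSolution d u₀ t x ^ 2
      ≤ (exp (d / (4 * t)) * ∑ m ∈ cubeOffsets d, heatSolution d u₀ t (latticePoint (k + m))) ^ 2 :=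
        pow_le_pow_left₀ (heatSolution_nonneg hu₀pos ht.le x)
          (heatSolution_le_exp_mul_sum hu₀L2 hu₀pos ht hx) 2
    _ = exp (d / (2 * t)) *
          (∑ m ∈ cubeOffsets d, heatSolution d u₀ t (latticePoint (k + m))) ^ 2 := by
        rw [mul_pow, hexp]
    _ ≤ _ := by
        rw [mul_comm (3 ^ d : ℝ), mul_assoc]
        gcongr

end Heat

theorem heat_local_L2_lattice_bound_general
    (d : ℕ) (u₀ : EuclideanSpace ℝ (Fin d) → ℝ)
    (hu₀L2 : MemLp u₀ 2 (volume : Measure (EuclideanSpace ℝ (Fin d))))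
    (hu₀pos : 0 ≤ᵐ[volume] u₀) :
    ∀ t : ℝ, 0 < t → ∀ k : Fin d → ℤ,
      (∫ x in {x : EuclideanSpace ℝ (Fin d) | ∀ i, |x i - (k i : ℝ)| ≤ 1},
          (heatSolution d u₀ t x) ^ 2) ≤
        24 ^ d * Real.exp (2 * (d : ℝ) / t) *
          ∑ m ∈ Fintype.piFinset (fun _ : Fin d => ({-1, 0, 1} : Finset ℤ)),
            (heatSolution d u₀ t
              (show EuclideanSpace ℝ (Fin d) from WithLp.toLp 2 (fun i => ((k i + m i : ℤ) : ℝ)))) ^ 2 := by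
  intro t ht k
  change ∫ x in cubeSideTwo (k ·), heatSolution d u₀ t x ^ 2 ≤ 24 ^ d * exp (2 * d / t) *
    ∑ m ∈ cubeOffsets d, heatSolution d u₀ t (latticePoint (k + m)) ^ 2
  set S := ∑ m ∈ cubeOffsets d, heatSolution d u₀ t (latticePoint (k + m)) ^ 2
  have hbound : ‖∫ x in cubeSideTwo (k ·), heatSolution d u₀ t x ^ 2‖ ≤
      3 ^ d * exp (d / (2 * t)) * S * volume.real (cubeSideTwo (k ·)) :=
    norm_setIntegral_le_of_norm_le_const (by simp [volume_cubeSideTwo]) fun x hx =>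
      (abs_of_nonneg (sq_nonneg _)).trans_le
        (heatSolution_sq_le_three_pow_mul_sum hu₀L2 hu₀pos ht hx)
  calc ∫ x in cubeSideTwo (k ·), heatSolution d u₀ t x ^ 2
      ≤ 3 ^ d * exp (d / (2 * t)) * S * volume.real (cubeSideTwo (k ·)) :=
        (le_abs_self _).trans hbound
    _ = 6 ^ d * exp (d / (2 * t)) * S := by
        simp only [measureReal_def, volume_cubeSideTwo, ENNReal.toReal_pow, ENNReal.toReal_ofNat]
        rw [show (6 : ℝ) ^ d = 3 ^ d * 2 ^ d by rw [← mul_pow]; norm_num]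
        ring
    _ ≤ 24 ^ d * exp (2 * d / t) * S := by
        gcongr ?_ ^ d * exp ?_ * _
        · norm_num
        · rw [div_le_div_iff₀ (by positivity) ht]
          nlinarith [(Nat.cast_nonneg d : (0 : ℝ) ≤ d)]

/-- For a non-negative initial datum `u₀ ∈ L²(ℝ^d)`, the heat solution satisfies,
for every `t > 0` and `k ∈ ℤ^d`,
`∫_{Q₂(k)} u(t,x)² dx ≤ 24^d * exp (2d/t) * ∑_{n ∈ ℤ^d, ‖n-k‖_∞ ≤ 1} u(t,n)²`. -/
theorem heat_local_L2_lattice_bound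
    (d : ℕ) (hd : 1 ≤ d) (u₀ : EuclideanSpace ℝ (Fin d) → ℝ)
    (hu₀L2 : MemLp u₀ 2 (volume : Measure (EuclideanSpace ℝ (Fin d))))
    (hu₀pos : 0 ≤ᵐ[volume] u₀) :
    ∀ t : ℝ, 0 < t → ∀ k : Fin d → ℤ,
      (∫ x in {x : EuclideanSpace ℝ (Fin d) | ∀ i, |x i - (k i : ℝ)| ≤ 1},
          (heatSolution d u₀ t x) ^ 2) ≤
        24 ^ d * Real.exp (2 * (d : ℝ) / t) *
          ∑ m ∈ Fintype.piFinset (fun _ : Fin d => ({-1, 0, 1} : Finset ℤ)),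
            (heatSolution d u₀ t
              (show EuclideanSpace ℝ (Fin d) from WithLp.toLp 2 (fun i => ((k i + m i : ℤ) : ℝ)))) ^ 2 :=
  heat_local_L2_lattice_bound_general d u₀ hu₀L2 hu₀pos
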